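/- Neyman orthogonality: in the partially linear network model with ε^Y, ε^T, A.mulVec ∘ ε^T square-integrable, let m, ℓ : Ω → EuclideanSpace ℝ (Fin n) be 𝒢-measurable and square-integrable. Then both coordinates of the map f : ℝ → ℝ², f(r) = E[ψ(θ₀, α₀, m₀ + r•(m − m₀), ℓ₀ + r•(ℓ − ℓ₀))], have derivative 0 at r = 0. -/

import Mathlib

/-!
Write `m₀ = E[T | 𝒢]`, `ℓ₀ = E[Y | 𝒢]` and let `K` be the identity or `A`. Since
`ℓ₀ = θ₀ m₀ + α₀ A m₀ + g`, the residual at `r` is `ε^Y - r V` and the second factor of the score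
is `W - r X`, with `W = K (T - m₀)` and `V, X` both `𝒢`-measurable. Hence the integrand is
`⟪ε^Y, W⟫ - r (⟪X, ε^Y⟫ + ⟪V, W⟫) + r² ⟪V, X⟫`. The constant term has mean zero because `W` is
`ℋ`-measurable and `E[ε^Y | ℋ] = 0`, and the linear term because `ε^Y` and `W` have zero
conditional mean given `𝒢` (pull-out property). The nuisances `V, X` need not be square-integrable,
so the two other coefficients may fail to be integrable; but then the integrand is integrable for
at most one `r ≠ 0`, and the expected score vanishes identically near `0`, the integral of a
non-integrable function being `0`.
-/

open MeasureTheory ProbabilityTheory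
open scoped RealInnerProductSpace ENNReal

/-- The action of the matrix `A` on vectors, `A.mulVec`, viewed as a map of
`EuclideanSpace ℝ (Fin n)` (it is definitionally `A.mulVec`). -/
noncomputable def mulVecE {n : ℕ} (A : Matrix (Fin n) (Fin n) ℝ)
    (v : EuclideanSpace ℝ (Fin n)) : EuclideanSpace ℝ (Fin n) :=
  WithLp.toLp 2 (A.mulVec v)

section Quadratic

variable {Ω : Type*} {m₀ : MeasurableSpace Ω} {μ : Measure Ω} {C₀ C₁ C₂ : Ω → ℝ}

theorem integrable_of_integrable_quadratic {s t : ℝ} (hs : s ≠ 0) (ht : t ≠ 0) (hst : s ≠ t)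
    (h₀ : Integrable C₀ μ) (h_s : Integrable (fun ω => C₀ ω - s * C₁ ω + s ^ 2 * C₂ ω) μ)
    (h_t : Integrable (fun ω => C₀ ω - t * C₁ ω + t ^ 2 * C₂ ω) μ) :
    Integrable C₁ μ ∧ Integrable C₂ μ := by
  have hs₀ := h_s.sub h₀
  have ht₀ := h_t.sub h₀
  -- `t (q s - q 0) - s (q t - q 0) = s t (s - t) C₂` for `q r = C₀ - r C₁ + r² C₂`
  have hC₂ : Integrable C₂ μ := by
    refine ((hs₀.const_mul t).sub (ht₀.const_mul s)).div_const (s * t * (s - t)) |>.congr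
      (.of_forall fun ω => ?_)
    have hst' : s - t ≠ 0 := sub_ne_zero.2 hst
    simp only [Pi.sub_apply]
    field_simp
    ring
  refine ⟨?_, hC₂⟩
  refine ((hC₂.const_mul (s ^ 2)).sub hs₀).div_const s |>.congr (.of_forall fun ω => ?_)
  simp only [Pi.sub_apply]
  field_simp
  ring

theorem hasDerivAt_integral_quadratic (h₀ : Integrable C₀ μ) (h₀_eq : ∫ ω, C₀ ω ∂μ = 0)
    (h₁_eq : Integrable C₁ μ → ∫ ω, C₁ ω ∂μ = 0) :
    HasDerivAt (fun r : ℝ => ∫ ω, C₀ ω - r * C₁ ω + r ^ 2 * C₂ ω ∂μ) 0 0 := by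
  by_cases hC : Integrable C₁ μ ∧ Integrable C₂ μ
  · obtain ⟨hC₁, hC₂⟩ := hC
    have hf : (fun r : ℝ => ∫ ω, C₀ ω - r * C₁ ω + r ^ 2 * C₂ ω ∂μ) =
        fun r => (∫ ω, C₂ ω ∂μ) * r ^ 2 := by
      funext r
      have hC₁r : Integrable (fun ω => r * C₁ ω) μ := hC₁.const_mul r
      have hC₀₁ : Integrable (fun ω => C₀ ω - r * C₁ ω) μ := h₀.sub hC₁r
      rw [integral_add hC₀₁ (hC₂.const_mul _), integral_sub h₀ hC₁r, integral_const_mul,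
        integral_const_mul, h₀_eq, h₁_eq hC₁]
      ring
    rw [hf]
    simpa using (hasDerivAt_pow 2 (0 : ℝ)).const_mul (∫ ω, C₂ ω ∂μ)
  let S := {r : ℝ | r ≠ 0 ∧ Integrable (fun ω => C₀ ω - r * C₁ ω + r ^ 2 * C₂ ω) μ}
  have hS : S.Subsingleton := fun s hs t ht => by_contra fun hst =>
    hC (integrable_of_integrable_quadratic hs.1 ht.1 hst h₀ hs.2 ht.2)
  refine (hasDerivAt_const (0 : ℝ) (0 : ℝ)).congr_of_eventuallyEq ?_
  filter_upwards [hS.finite.isClosed.isOpen_compl.mem_nhds fun h => h.1 rfl] with r hr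
  rcases eq_or_ne r 0 with rfl | hr₀
  · simpa using h₀_eq
  · exact integral_undef fun h => hr ⟨hr₀, h⟩

end Quadratic

section PullOut

variable {Ω : Type*} {m m₀ : MeasurableSpace Ω} {μ : Measure Ω}
  {E F G : Type*} [NormedAddCommGroup E] [NormedSpace ℝ E] [CompleteSpace E]
  [NormedAddCommGroup F] [NormedSpace ℝ F] [NormedAddCommGroup G] [NormedSpace ℝ G]

theorem condExp_prodMk [CompleteSpace F] {f : Ω → E} {g : Ω → F} (hf : Integrable f μ)
    (hg : Integrable g μ) :
    μ[fun ω => (f ω, g ω)|m] =ᵐ[μ] fun ω => (μ[f|m] ω, μ[g|m] ω) := by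
  filter_upwards [(ContinuousLinearMap.fst ℝ E F).comp_condExp_comm (m := m) (hf.prodMk hg),
    (ContinuousLinearMap.snd ℝ E F).comp_condExp_comm (m := m) (hf.prodMk hg)] with ω h₁ h₂
  exact Prod.ext h₁ h₂

theorem integral_bilin_eq_zero_of_condExp_eq_zero [CompleteSpace G] (B : F →L[ℝ] E →L[ℝ] G)
    (hm : m ≤ m₀) [SigmaFinite (μ.trim hm)] {h : Ω → F} {e : Ω → E}
    (hh : StronglyMeasurable[m] h) (he : Integrable e μ) (he₀ : μ[e|m] =ᵐ[μ] 0)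
    (hint : Integrable (fun ω => B (h ω) (e ω)) μ) :
    ∫ ω, B (h ω) (e ω) ∂μ = 0 := by
  rw [← integral_condExp hm, integral_eq_zero_of_ae]
  filter_upwards [condExp_bilin_of_stronglyMeasurable_left B hh hint he, he₀] with ω h₁ h₂
  simp [h₁, h₂]

theorem condExp_ae_eq_zero_of_le {m₁ : MeasurableSpace Ω} (hm : m ≤ m₁) (hm₁ : m₁ ≤ m₀)
    [SigmaFinite (μ.trim hm₁)] {f : Ω → E} (hf : μ[f|m₁] =ᵐ[μ] 0) : μ[f|m] =ᵐ[μ] 0 := by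
  refine (condExp_condExp_of_le hm hm₁).symm.trans ?_
  rw [← condExp_zero]
  exact condExp_congr_ae hf

theorem condExp_sub_condExp_self (hm : m ≤ m₀) [SigmaFinite (μ.trim hm)] {f : Ω → E}
    (hf : Integrable f μ) : μ[f - μ[f|m]|m] =ᵐ[μ] 0 := by
  filter_upwards [condExp_sub hf integrable_condExp m] with ω h
  rw [h, condExp_of_stronglyMeasurable hm stronglyMeasurable_condExp integrable_condExp]
  simp

theorem condExp_partiallyLinear (L : E →L[ℝ] E) (hm : m ≤ m₀) [SigmaFinite (μ.trim hm)]
    (θ α : ℝ) {T g ε : Ω → E} (hT : Integrable T μ) (hg_meas : StronglyMeasurable[m] g)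
    (hg : Integrable g μ) (hε : Integrable ε μ) (hε₀ : μ[ε|m] =ᵐ[μ] 0) :
    μ[θ • T + α • (fun ω => L (T ω)) + g + ε|m] =ᵐ[μ]
      θ • μ[T|m] + α • (fun ω => L (μ[T|m] ω)) + g := by
  have hLT : Integrable (fun ω => L (T ω)) μ := L.integrable_comp hT
  filter_upwards [condExp_add (((hT.smul θ).add (hLT.smul α)).add hg) hε m,
    condExp_add ((hT.smul θ).add (hLT.smul α)) hg m, condExp_add (hT.smul θ) (hLT.smul α) m,
    condExp_smul θ T m, condExp_smul α (fun ω => L (T ω)) m, L.comp_condExp_comm (m := m) hT,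
    hε₀] with ω h₁ h₂ h₃ h₄ h₅ h₆ h₇
  rw [condExp_of_stronglyMeasurable hm hg_meas hg] at h₂
  rw [Function.comp_def, Function.comp_def] at h₆
  simp only [Pi.add_apply, Pi.smul_apply, h₁, h₂, h₃, h₄, h₅, ← h₆, h₇, Pi.zero_apply, add_zero]

theorem integral_inner_add_inner_eq_zero_of_condExp_eq_zero {H : Type*} [NormedAddCommGroup H]
    [InnerProductSpace ℝ H] [CompleteSpace H] (hm : m ≤ m₀) [SigmaFinite (μ.trim hm)]
    {h₁ h₂ e₁ e₂ : Ω → H} (hh₁ : StronglyMeasurable[m] h₁) (hh₂ : StronglyMeasurable[m] h₂)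
    (he₁ : Integrable e₁ μ) (he₂ : Integrable e₂ μ)
    (he₁₀ : μ[e₁|m] =ᵐ[μ] 0) (he₂₀ : μ[e₂|m] =ᵐ[μ] 0)
    (hint : Integrable (fun ω => ⟪h₁ ω, e₁ ω⟫ + ⟪h₂ ω, e₂ ω⟫) μ) :
    ∫ ω, ⟪h₁ ω, e₁ ω⟫ + ⟪h₂ ω, e₂ ω⟫ ∂μ = 0 := by
  let B : (H × H) →L[ℝ] (H × H) →L[ℝ] ℝ :=
    (innerSL ℝ (E := H)).bilinearComp (.fst ℝ H H) (.fst ℝ H H) +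
      (innerSL ℝ (E := H)).bilinearComp (.snd ℝ H H) (.snd ℝ H H)
  refine integral_bilin_eq_zero_of_condExp_eq_zero B hm (hh₁.prodMk hh₂) (he₁.prodMk he₂) ?_ hint
  filter_upwards [condExp_prodMk (m := m) he₁ he₂, he₁₀, he₂₀] with ω h h₁ h₂
  simp [h, h₁, h₂]

end PullOut

section PartiallyLinear

variable {Ω : Type*} {ℱ : MeasurableSpace Ω} {P : Measure Ω} [IsFiniteMeasure P]
  {𝒢 ℋ : MeasurableSpace Ω}
  {E : Type*} [NormedAddCommGroup E] [InnerProductSpace ℝ E] [CompleteSpace E]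

theorem hasDerivAt_integral_inner_sub_smul (h𝒢ℋ : 𝒢 ≤ ℋ) (hℋℱ : ℋ ≤ ℱ) {ε W V X : Ω → E}
    (hε_sq : MemLp ε 2 P) (hε : P[ε|ℋ] =ᵐ[P] 0)
    (hW_meas : StronglyMeasurable[ℋ] W) (hW_sq : MemLp W 2 P) (hW : P[W|𝒢] =ᵐ[P] 0)
    (hV : StronglyMeasurable[𝒢] V) (hX : StronglyMeasurable[𝒢] X) :
    HasDerivAt (fun r : ℝ => ∫ ω, ⟪ε ω - r • V ω, W ω - r • X ω⟫ ∂P) 0 0 := by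
  have hε_int : Integrable ε P := hε_sq.integrable one_le_two
  have hεW : Integrable (fun ω => ⟪W ω, ε ω⟫) P :=
    memLp_one_iff_integrable.1 ((innerSL ℝ).memLp_of_bilin 1 hW_sq hε_sq)
  have hexpand : (fun r : ℝ => ∫ ω, ⟪ε ω - r • V ω, W ω - r • X ω⟫ ∂P) = fun r : ℝ =>
      ∫ ω, ⟪W ω, ε ω⟫ - r * (⟪X ω, ε ω⟫ + ⟪V ω, W ω⟫) + r ^ 2 * ⟪V ω, X ω⟫ ∂P := by
    funext r
    congr 1 with ω
    simp only [inner_sub_left, inner_sub_right, real_inner_smul_left, real_inner_smul_right,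
      real_inner_comm (ε ω)]
    ring
  rw [hexpand]
  exact hasDerivAt_integral_quadratic hεW
    (integral_bilin_eq_zero_of_condExp_eq_zero (innerSL ℝ) hℋℱ hW_meas hε_int hε hεW)
    (integral_inner_add_inner_eq_zero_of_condExp_eq_zero (h𝒢ℋ.trans hℋℱ) hX hV hε_int
      (hW_sq.integrable one_le_two) (condExp_ae_eq_zero_of_le h𝒢ℋ hℋℱ hε) hW)

theorem hasDerivAt_integral_score_perturb (L K : E →L[ℝ] E) (h𝒢ℋ : 𝒢 ≤ ℋ) (hℋℱ : ℋ ≤ ℱ)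
    {T g ε Y m ℓ : Ω → E} {θ α : ℝ}
    (hT_meas : StronglyMeasurable[ℋ] T) (hT_int : Integrable T P)
    (hg_meas : StronglyMeasurable[𝒢] g) (hg_int : Integrable g P)
    (hε_sq : MemLp ε 2 P) (hε_cond : P[ε|ℋ] =ᵐ[P] 0)
    (hY : Y = θ • T + α • (fun ω => L (T ω)) + g + ε)
    (hKεT_sq : MemLp (fun ω => K ((T - P[T|𝒢]) ω)) 2 P)
    (hm_meas : StronglyMeasurable[𝒢] m) (hℓ_meas : StronglyMeasurable[𝒢] ℓ) :
    HasDerivAt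
      (fun r : ℝ => ∫ ω,
        ⟪(Y - (P[Y|𝒢] + r • (ℓ - P[Y|𝒢]))
            - θ • (T - (P[T|𝒢] + r • (m - P[T|𝒢])))
            - α • (fun ω' => L ((T - (P[T|𝒢] + r • (m - P[T|𝒢]))) ω'))) ω,
          K ((T - (P[T|𝒢] + r • (m - P[T|𝒢]))) ω)⟫ ∂P)
      0 0 := by
  have h𝒢ℱ := h𝒢ℋ.trans hℋℱ
  have hℓ₀ : P[Y|𝒢] =ᵐ[P] θ • P[T|𝒢] + α • (fun ω => L (P[T|𝒢] ω)) + g := hY ▸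
    condExp_partiallyLinear L h𝒢ℱ θ α hT_int hg_meas hg_int (hε_sq.integrable one_le_two)
      (condExp_ae_eq_zero_of_le h𝒢ℋ hℋℱ hε_cond)
  have hKεT : P[fun ω => K ((T - P[T|𝒢]) ω)|𝒢] =ᵐ[P] 0 := by
    filter_upwards [(K.comp_condExp_comm (m := 𝒢) (hT_int.sub integrable_condExp)).symm,
      condExp_sub_condExp_self h𝒢ℱ hT_int] with ω h₁ h₂
    rw [← Function.comp_def, h₁, Function.comp_apply, h₂, Pi.zero_apply, map_zero]
  have hm₀ : StronglyMeasurable[𝒢] (P[T|𝒢]) := stronglyMeasurable_condExp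
  refine (hasDerivAt_integral_inner_sub_smul h𝒢ℋ hℋℱ hε_sq hε_cond
    (K.continuous.comp_stronglyMeasurable (hT_meas.sub (hm₀.mono h𝒢ℋ))) hKεT_sq hKεT
    (V := fun ω => ℓ ω - P[Y|𝒢] ω - θ • (m ω - P[T|𝒢] ω) - α • L (m ω - P[T|𝒢] ω))
    (X := fun ω => K (m ω - P[T|𝒢] ω)) ?_ ?_).congr_of_eventuallyEq
    (.of_forall fun r => integral_congr_ae ?_)
  · exact ((hℓ_meas.sub stronglyMeasurable_condExp).sub ((hm_meas.sub hm₀).const_smul θ)).sub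
      ((L.continuous.comp_stronglyMeasurable (hm_meas.sub hm₀)).const_smul α)
  · exact K.continuous.comp_stronglyMeasurable (hm_meas.sub hm₀)
  filter_upwards [hℓ₀] with ω hω
  have hYω : Y ω = θ • T ω + α • L (T ω) + g ω + ε ω := by rw [hY]; rfl
  simp only [Pi.sub_apply, Pi.add_apply, Pi.smul_apply] at hω ⊢
  simp only [hYω, hω, map_sub, map_add, map_smul]
  congr 1 <;> module

end PartiallyLinear

theorem neyman_orthogonality
    {Ω : Type*} {ℱ : MeasurableSpace Ω} {P : Measure Ω} [IsProbabilityMeasure P]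
    {n : ℕ} (A : Matrix (Fin n) (Fin n) ℝ)
    (𝒢 ℋ : MeasurableSpace Ω) (h𝒢ℋ : 𝒢 ≤ ℋ) (hℋℱ : ℋ ≤ ℱ)
    (T g εY Y : Ω → EuclideanSpace ℝ (Fin n)) (θ₀ α₀ : ℝ)
    (hT_meas : StronglyMeasurable[ℋ] T) (hT_int : Integrable T P)
    (hg_meas : StronglyMeasurable[𝒢] g) (hg_int : Integrable g P)
    (hεY_cond : P[εY|ℋ] =ᵐ[P] 0)
    (hY : Y = θ₀ • T + α₀ • (fun ω => mulVecE A (T ω)) + g + εY)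
    (hεY_sq : MemLp εY 2 P)
    (hεT_sq : MemLp (T - P[T|𝒢]) 2 P)
    (hAεT_sq : MemLp (fun ω => mulVecE A ((T - P[T|𝒢]) ω)) 2 P)
    (m ℓ : Ω → EuclideanSpace ℝ (Fin n))
    (hm_meas : StronglyMeasurable[𝒢] m)
    (hℓ_meas : StronglyMeasurable[𝒢] ℓ) :
    HasDerivAt
      (fun r : ℝ => ∫ ω,
        ⟪(Y - (P[Y|𝒢] + r • (ℓ - P[Y|𝒢]))
            - θ₀ • (T - (P[T|𝒢] + r • (m - P[T|𝒢])))
            - α₀ • (fun ω' => mulVecE A ((T - (P[T|𝒢] + r • (m - P[T|𝒢]))) ω'))) ω,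
          (T - (P[T|𝒢] + r • (m - P[T|𝒢]))) ω⟫ ∂P)
      0 0 ∧
    HasDerivAt
      (fun r : ℝ => ∫ ω,
        ⟪(Y - (P[Y|𝒢] + r • (ℓ - P[Y|𝒢]))
            - θ₀ • (T - (P[T|𝒢] + r • (m - P[T|𝒢])))
            - α₀ • (fun ω' => mulVecE A ((T - (P[T|𝒢] + r • (m - P[T|𝒢]))) ω'))) ω,
          mulVecE A ((T - (P[T|𝒢] + r • (m - P[T|𝒢]))) ω)⟫ ∂P)
      0 0 := by
  let L := Matrix.toEuclideanCLM (𝕜 := ℝ) A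
  exact ⟨hasDerivAt_integral_score_perturb L (.id ℝ _) h𝒢ℋ hℋℱ hT_meas hT_int hg_meas hg_int
      hεY_sq hεY_cond hY hεT_sq hm_meas hℓ_meas,
    hasDerivAt_integral_score_perturb L L h𝒢ℋ hℋℱ hT_meas hT_int hg_meas hg_int
      hεY_sq hεY_cond hY hAεT_sq hm_meas hℓ_meas⟩
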